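/- arXiv:1704.02405 — 3 statements merged into one kernel-verified Lean document; each statement's English description precedes it below -/
import Mathlib

section
/- Define d on dominant pairs λ = (λ_1, λ_2) ∈ ℤ_{≥0}^2 (with λ_1 ≥ λ_2) recursively by: writing λ = λ⁰ + e λ̄ (λ⁰ column e-regular, λ̄ dominant nonnegative), set d(λ) = λ⁰_2 if λ⁰_1 < e−1 and c(λ̄) holds, and d(λ) = λ⁰_1 − (e−1) + e·d(λ̄) otherwise, where c(μ) means d(μ) = 0, with d(0,0) = 0. Then d is well-defined (the recursion terminates) and d(λ) ≥ 0 for all λ; moreover d(λ) = 0 iff (λ⁰_1 = e−1 and c(λ̄)) or (λ⁰_2 = 0 and c(λ̄)). -/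
/-- The column e-regular part λ⁰ of a dominant pair λ ∈ ℤ_{≥0}². -/
def res (e : ℕ) (l : ℕ × ℕ) : ℕ × ℕ := ((l.1 - l.2) % e + l.2 % e, l.2 % e)

/-- The quotient part λ̄, so that λ = λ⁰ + e·λ̄. -/
def bar (e : ℕ) (l : ℕ × ℕ) : ℕ × ℕ := ((l.1 - (res e l).1) / e, l.2 / e)

theorem bar_lt (e : ℕ) (he : ¬ e ≤ 1) (l : ℕ × ℕ) (hl : ¬ l = (0, 0)) :
    (bar e l).1 + (bar e l).2 < l.1 + l.2 := by
  have h2 : 2 ≤ e := by omega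
  have hb1 : (bar e l).1 ≤ l.1 / e :=
    Nat.div_le_div_right (Nat.sub_le _ _)
  have hb2 : (bar e l).2 = l.2 / e := rfl
  have h1 : l.1 / e ≤ l.1 := Nat.div_le_self _ _
  have h2' : l.2 / e ≤ l.2 := Nat.div_le_self _ _
  rcases Nat.eq_zero_or_pos l.1 with h | h
  · have hpos : 0 < l.2 := by
      rcases l with ⟨a, b⟩
      simp only [Prod.mk.injEq] at hl
      dsimp only at h ⊢
      omega
    have : l.2 / e < l.2 := Nat.div_lt_self hpos (by omega)
    omega
  · have : l.1 / e < l.1 := Nat.div_lt_self h (by omega)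
    omega

/-- The i-th column e-regular "digit" λ^i of λ = ∑ e^i λ^i. -/
def digit (e : ℕ) : ℕ → ℕ × ℕ → ℕ × ℕ
  | 0, l => res e l
  | i + 1, l => digit e i (bar e l)

/-- Criticality, defined recursively (Lemma 5.1/5.2):
c(λ) holds iff (λ⁰_1 = e−1 or λ⁰_2 = 0) and c(λ̄), with c(0,0) true. -/
def crit (e : ℕ) (l : ℕ × ℕ) : Prop :=
  if h : e ≤ 1 ∨ l = (0, 0) then True
  else ((res e l).1 = e - 1 ∨ (res e l).2 = 0) ∧ crit e (bar e l)
termination_by l.1 + l.2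
decreasing_by exact bar_lt e (by tauto) l (by tauto)

/-- The divisibility index on dominant pairs, defined recursively (Lemma 5.4):
d(λ) = λ⁰_2 if λ⁰_1 < e−1 and d(λ̄) = 0, else d(λ) = λ⁰_1 − (e−1) + e·d(λ̄). -/
def dd (e : ℕ) (l : ℕ × ℕ) : ℤ :=
  if h : e ≤ 1 ∨ l = (0, 0) then 0
  else if (res e l).1 < e - 1 ∧ dd e (bar e l) = 0 then ((res e l).2 : ℤ)
  else ((res e l).1 : ℤ) - ((e : ℤ) - 1) + (e : ℤ) * dd e (bar e l)
termination_by l.1 + l.2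
decreasing_by all_goals exact bar_lt e (by tauto) l (by tauto)

lemma dd_nonneg_aux (e : ℕ) : ∀ n (l : ℕ × ℕ), l.1 + l.2 ≤ n → 0 ≤ dd e l := by
  intro n
  induction n with
  | zero =>
    intro l hl
    have : l = (0, 0) := by
      rcases l with ⟨a, b⟩; simp only [Prod.mk.injEq]; omega
    rw [dd]; simp [this]
  | succ n ih =>
    intro l hl
    rw [dd]
    split_ifs with h1 h2
    · rfl
    · exact Int.ofNat_nonneg _
    · push_neg at h1
      have hbar : 0 ≤ dd e (bar e l) := by
        apply ih
        have := bar_lt e (by omega) l h1.2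
        omega
      push_neg at h2
      rcases lt_or_ge ((res e l).1) (e - 1) with hc | hc
      · have hne := h2 hc
        have : 1 ≤ dd e (bar e l) := by omega
        have he2 : 2 ≤ e := by omega
        nlinarith [Int.ofNat_nonneg (res e l).1]
      · have : (e : ℤ) - 1 ≤ ((res e l).1 : ℤ) := by
          omega
        nlinarith

lemma dd_nonneg (e : ℕ) (l : ℕ × ℕ) : 0 ≤ dd e l :=
  dd_nonneg_aux e (l.1 + l.2) l le_rfl

/-- The recursively defined divisibility index d is well-defined (the definition
`dd` above terminates), nonnegative, and d(λ) = 0 iff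
(λ⁰_1 = e−1 and d(λ̄) = 0) or (λ⁰_2 = 0 and d(λ̄) = 0). -/
theorem stmt11 (e : ℕ) (he : 2 ≤ e) (l : ℕ × ℕ) (hdom : l.2 ≤ l.1) :
    0 ≤ dd e l ∧
    (dd e l = 0 ↔
      ((res e l).1 = e - 1 ∧ dd e (bar e l) = 0) ∨
      ((res e l).2 = 0 ∧ dd e (bar e l) = 0)) := by
  have he1 : ¬ e ≤ 1 := by omega
  by_cases h0 : l = (0, 0)
  · subst h0
    have hres : res e (0, 0) = (0, 0) := by simp [res]
    have hbar : bar e (0, 0) = (0, 0) := by simp [bar, hres]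
    constructor
    · rw [dd]; simp
    · rw [dd, hres, hbar]
      constructor
      · intro _
        right
        refine ⟨rfl, ?_⟩
        rw [dd]; simp
      · intro _; simp
  · have hbar : 0 ≤ dd e (bar e l) := dd_nonneg e (bar e l)
    have hres2lt : (res e l).2 < e := Nat.mod_lt _ (by omega)
    rw [dd]
    rw [dif_neg (by tauto)]
    split_ifs with h2
    · obtain ⟨hlt, hz⟩ := h2
      constructor
      · exact Int.ofNat_nonneg _
      · constructor
        · intro hr
          right
          exact ⟨by exact_mod_cast hr, hz⟩
        · rintro (⟨h, _⟩ | ⟨h, _⟩)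
          · omega
          · exact_mod_cast congrArg Nat.cast h
    · push_neg at h2
      rcases eq_or_ne (dd e (bar e l)) 0 with hz | hz
      · have hge : e - 1 ≤ (res e l).1 := by
          by_contra hc
          exact absurd hz (h2 (by omega))
        constructor
        · rw [hz]; push_cast; omega
        · rw [hz]
          constructor
          · intro hr
            left
            refine ⟨?_, rfl⟩
            have : ((res e l).1 : ℤ) = (e : ℤ) - 1 := by linarith
            omega
          · rintro (⟨h, _⟩ | ⟨h, _⟩)
            · rw [h]; push_cast; omega
            · -- res.2 = 0 means res.1 = (l.1-l.2) % e < e, with ≥ e-1 get = e-1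
              have h1lt : (res e l).1 < e := by
                have hm : (l.1 - l.2) % e < e := Nat.mod_lt _ (by omega)
                have h2z : l.2 % e = 0 := h
                show (l.1 - l.2) % e + l.2 % e < e
                omega
              have : (res e l).1 = e - 1 := by omega
              rw [this]; push_cast; omega
      · have h1 : 1 ≤ dd e (bar e l) := by omega
        constructor
        · nlinarith [Int.ofNat_nonneg (res e l).1, (by omega : (2:ℤ) ≤ (e:ℤ))]
        · constructor
          · intro hr
            exfalso
            nlinarith [Int.ofNat_nonneg (res e l).1, (by omega : (2:ℤ) ≤ (e:ℤ))]
          · rintro (⟨_, h⟩ | ⟨_, h⟩) <;> exact absurd h hz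
end

section
/- With d as defined by the recursion d(λ) = λ⁰_2 if λ⁰_1 < e−1 and d(λ̄) = 0, else d(λ) = λ⁰_1 − (e−1) + e·d(λ̄) (for λ = λ⁰ + eλ̄, λ⁰ column e-regular), and writing λ = ∑_{i≥0} e^i λ^i in column-e-regular digits: if every digit satisfies λ^i_1 = e−1 or λ^i_2 = 0 then d(λ) = 0; otherwise, letting m be maximal such that λ^m_1 ≠ e−1 and λ^m_2 ≠ 0, and α = ∑_{0≤i<m} e^i λ^i, then d(λ) = α_1 + e^m λ^m_2 − (e^m − 1) if λ^m_1 < e−1, and d(λ) = α_1 + e^m λ^m_1 − (e^{m+1} − 1) if λ^m_1 ≥ e−1. -/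
lemma digit_zero_eq (e : ℕ) (l : ℕ × ℕ) : digit e 0 l = res e l := rfl
lemma digit_succ_eq (e i : ℕ) (l : ℕ × ℕ) : digit e (i+1) l = digit e i (bar e l) := rfl

lemma res_zero (e : ℕ) : res e (0,0) = (0,0) := by simp [res]
lemma bar_zero (e : ℕ) : bar e (0,0) = (0,0) := by simp [bar, res]
lemma digit_zz (e : ℕ) : ∀ i, digit e i ((0,0) : ℕ × ℕ) = (0,0)
  | 0 => res_zero e
  | i+1 => by rw [digit_succ_eq, bar_zero]; exact digit_zz e i

lemma decomp (e : ℕ) (he : 2 ≤ e) (l : ℕ × ℕ) (hdom : l.2 ≤ l.1) :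
    l.1 = (res e l).1 + e * (bar e l).1 ∧ l.2 = (res e l).2 + e * (bar e l).2 ∧
    (bar e l).2 ≤ (bar e l).1 := by
  obtain ⟨a, b⟩ := l
  simp only [res, bar] at *
  have h1 := Nat.div_add_mod (a - b) e
  have h2 := Nat.div_add_mod b e
  have h3 : (a - b) % e ≤ a - b := Nat.mod_le _ _
  have h4 : b % e ≤ b := Nat.mod_le _ _
  have key : a - ((a-b)%e + b%e) = e * ((a-b)/e) + e * (b/e) := by omega
  have hq : (a - ((a-b)%e + b%e)) / e = (a-b)/e + b/e := by
    rw [key, ← Nat.mul_add, Nat.mul_div_cancel_left _ (by omega : 0 < e)]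
  rw [hq, Nat.mul_add]
  exact ⟨by omega, by omega, Nat.le_add_left _ _⟩

lemma key_lemma (e : ℕ) (he : 2 ≤ e) :
    ∀ n : ℕ, ∀ l : ℕ × ℕ, l.1 + l.2 = n → l.2 ≤ l.1 →
    ((∀ i : ℕ, (digit e i l).1 = e - 1 ∨ (digit e i l).2 = 0) → dd e l = 0) ∧
    (∀ m : ℕ, ¬ ((digit e m l).1 = e - 1 ∨ (digit e m l).2 = 0) →
      (∀ j : ℕ, m < j → ((digit e j l).1 = e - 1 ∨ (digit e j l).2 = 0)) →
      dd e l =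
        if (digit e m l).1 < e - 1 then
          (∑ i ∈ Finset.range m, (e : ℤ)^i * ((digit e i l).1 : ℤ))
            + (e : ℤ)^m * ((digit e m l).2 : ℤ) - ((e : ℤ)^m - 1)
        else
          (∑ i ∈ Finset.range m, (e : ℤ)^i * ((digit e i l).1 : ℤ))
            + (e : ℤ)^m * ((digit e m l).1 : ℤ) - ((e : ℤ)^(m+1) - 1)) := by
  intro n
  induction n using Nat.strong_induction_on with
  | _ n ih =>
  intro l hn hdom
  by_cases h0 : l = (0,0)
  · subst h0
    have hdd0 : dd e ((0,0) : ℕ × ℕ) = 0 := by rw [dd]; simp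
    refine ⟨fun _ => hdd0, fun m hm _ => absurd (Or.inr (by rw [digit_zz])) hm⟩
  · have hne : ¬ (e ≤ 1 ∨ l = (0,0)) := by push_neg; exact ⟨by omega, h0⟩
    have hlt := bar_lt e (by omega) l h0
    obtain ⟨hd1, hd2, hbdom⟩ := decomp e he l hdom
    have IH := ih ((bar e l).1 + (bar e l).2) (by omega) (bar e l) rfl hbdom
    have hdd : dd e l = if (res e l).1 < e - 1 ∧ dd e (bar e l) = 0 then ((res e l).2 : ℤ)
        else ((res e l).1 : ℤ) - ((e : ℤ) - 1) + (e : ℤ) * dd e (bar e l) := by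
      rw [dd, dif_neg hne]
    have hr1 : (res e l).1 = (l.1 - l.2) % e + l.2 % e := rfl
    have hr2 : (res e l).2 = l.2 % e := rfl
    have hm1 : (l.1 - l.2) % e < e := Nat.mod_lt _ (by omega)
    have hm2 : l.2 % e < e := Nat.mod_lt _ (by omega)
    constructor
    · intro hall
      have hbar0 : dd e (bar e l) = 0 := IH.1 (fun i => hall (i+1))
      have h0d : (res e l).1 = e - 1 ∨ (res e l).2 = 0 := hall 0
      rw [hdd]
      by_cases hc : (res e l).1 < e - 1 ∧ dd e (bar e l) = 0
      · rw [if_pos hc]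
        rcases h0d with h | h
        · omega
        · rw [h]; simp
      · rw [if_neg hc]
        have hge : ¬ (res e l).1 < e - 1 := fun hx => hc ⟨hx, hbar0⟩
        have heq : (res e l).1 = e - 1 := by
          rcases h0d with h | h
          · exact h
          · omega
        rw [heq, hbar0]
        have : ((e - 1 : ℕ) : ℤ) = (e : ℤ) - 1 := by omega
        rw [this]; ring
    · intro m hm hj
      match m with
      | 0 =>
        have hbar0 : dd e (bar e l) = 0 := IH.1 (fun i => hj (i+1) (by omega))
        simp only [digit_zero_eq] at hm ⊢
        rw [hdd]
        by_cases hlt1 : (res e l).1 < e - 1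
        · rw [if_pos ⟨hlt1, hbar0⟩]
          simp [hlt1]
        · rw [if_neg (fun hx => hlt1 hx.1), hbar0]
          simp only [hlt1, ↓reduceIte]
          simp only [Finset.range_zero, Finset.sum_empty, pow_zero, one_mul, zero_add,
            pow_one]
          ring
      | m' + 1 =>
        have hm' : ¬ ((digit e m' (bar e l)).1 = e - 1 ∨ (digit e m' (bar e l)).2 = 0) := hm
        have hj' : ∀ j : ℕ, m' < j →
            ((digit e j (bar e l)).1 = e - 1 ∨ (digit e j (bar e l)).2 = 0) :=
          fun j hjj => hj (j+1) (by omega)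
        have F := (IH.2) m' hm' hj'
        have hS : 0 ≤ ∑ i ∈ Finset.range m', (e:ℤ)^i * ((digit e i (bar e l)).1 : ℤ) :=
          Finset.sum_nonneg (fun i _ => by positivity)
        have hpow : (1:ℤ) ≤ (e:ℤ)^m' := one_le_pow₀ (by exact_mod_cast (by omega : 1 ≤ e))
        have hdbpos : 0 < dd e (bar e l) := by
          rw [F]
          split_ifs with hc
          · have h2 : 1 ≤ ((digit e m' (bar e l)).2 : ℤ) := by
              have := (not_or.mp hm').2
              omega
            nlinarith [hS, hpow]
          · have h1 : (e:ℤ) ≤ ((digit e m' (bar e l)).1 : ℤ) := by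
              have ha := (not_or.mp hm').1
              omega
            have hp : (e:ℤ)^(m'+1) = (e:ℤ)^m' * e := pow_succ _ _
            nlinarith [hS, hpow]
        have hdbne : dd e (bar e l) ≠ 0 := ne_of_gt hdbpos
        have hsum : (∑ i ∈ Finset.range (m'+1), (e:ℤ)^i * ((digit e i l).1 : ℤ))
            = ((res e l).1 : ℤ)
              + (e:ℤ) * ∑ i ∈ Finset.range m', (e:ℤ)^i * ((digit e i (bar e l)).1 : ℤ) := by
          rw [Finset.sum_range_succ']
          simp only [digit_succ_eq, digit_zero_eq, pow_zero, one_mul]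
          rw [Finset.mul_sum, add_comm]
          congr 1
          apply Finset.sum_congr rfl
          intro i _
          ring
        rw [hdd, if_neg (fun hx => hdbne hx.2), F]
        simp only [digit_succ_eq]
        split_ifs with hc
        · simp only [hc, ↓reduceIte]; rw [hsum]; ring
        · simp only [hc, ↓reduceIte]; rw [hsum]; ring

/-- Proposition 5.5(ii) (combinatorial form): the closed formula for the
divisibility index in terms of the column e-regular digits λ^i of λ. -/
theorem stmt12 (e : ℕ) (he : 2 ≤ e) (l : ℕ × ℕ) (hdom : l.2 ≤ l.1) :
    ((∀ i : ℕ, (digit e i l).1 = e - 1 ∨ (digit e i l).2 = 0) → dd e l = 0) ∧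
    (∀ m : ℕ, ¬ ((digit e m l).1 = e - 1 ∨ (digit e m l).2 = 0) →
      (∀ j : ℕ, m < j → ((digit e j l).1 = e - 1 ∨ (digit e j l).2 = 0)) →
      dd e l =
        if (digit e m l).1 < e - 1 then
          (∑ i ∈ Finset.range m, (e : ℤ)^i * ((digit e i l).1 : ℤ))
            + (e : ℤ)^m * ((digit e m l).2 : ℤ) - ((e : ℤ)^m - 1)
        else
          (∑ i ∈ Finset.range m, (e : ℤ)^i * ((digit e i l).1 : ℤ))
            + (e : ℤ)^m * ((digit e m l).1 : ℤ) - ((e : ℤ)^(m+1) - 1)) := by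
  exact key_lemma e he (l.1 + l.2) l rfl hdom
end

section
/- For e ≥ 2 and the n = 2 symmetric power character recursion: writing r = r₀ + e·r̄ with 0 ≤ r₀ < e, the complete homogeneous symmetric polynomial in two variables satisfies h_r(x, y) = χ_{e−1}(x,y)·h_{r̄}(x^e, y^e) if r₀ = e−1, and h_r(x,y) = χ_{r₀}(x,y)·h_{r̄}(x^e,y^e) + (xy)^{r₀+1}·χ_{e−2−r₀}(x,y)·h_{r̄−1}(x^e,y^e) otherwise (with the convention h_{−1} = 0), where χ_j(x,y) = h_j(x,y) = (x^{j+1} − y^{j+1})/(x − y) is the character of the simple module L(j, 0) for 0 ≤ j < e, and (xy)^{r₀+1}·χ_{e−2−r₀} is the character of L(e−1, r₀+1). -/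
open MvPolynomial

/-- h_r(x,y) = ∑_{i=0}^r x^i y^{r−i}, the complete homogeneous symmetric
polynomial in two variables (character of S^r E for GL₂); for 0 ≤ j < e it is
also the character χ_j of the simple module L(j,0). -/
noncomputable def h2 (r : ℕ) : MvPolynomial (Fin 2) ℤ :=
  ∑ i ∈ Finset.range (r + 1), X 0 ^ i * X 1 ^ (r - i)

/-- h extended to ℤ with the convention h_{−1} = 0. -/
noncomputable def hE (r : ℤ) : MvPolynomial (Fin 2) ℤ :=
  if 0 ≤ r then h2 r.toNat else 0

/-- The Frobenius substitution x ↦ x^e, y ↦ y^e. -/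
noncomputable def frobSub (e : ℕ) : MvPolynomial (Fin 2) ℤ →ₐ[ℤ] MvPolynomial (Fin 2) ℤ :=
  aeval fun i : Fin 2 => (X i) ^ e

lemma h2_mul (r : ℕ) :
    h2 r * (X 0 - X 1) = (X 0 : MvPolynomial (Fin 2) ℤ) ^ (r + 1) - X 1 ^ (r + 1) := by
  simpa [h2] using geom_sum₂_mul (X 0 : MvPolynomial (Fin 2) ℤ) (X 1) (r + 1)

lemma frob_h2_mul (e m : ℕ) :
    frobSub e (h2 m) * ((X 0 : MvPolynomial (Fin 2) ℤ) ^ e - X 1 ^ e)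
      = X 0 ^ (e * (m + 1)) - X 1 ^ (e * (m + 1)) := by
  have hx : ∀ i : Fin 2, frobSub e (X i) = X i ^ e := fun i => aeval_X _ i
  have := congrArg (frobSub e) (h2_mul m)
  rw [map_mul, map_sub, map_sub, map_pow, map_pow, hx, hx] at this
  rw [this, ← pow_mul, ← pow_mul]

lemma frob_hE_mul (e m : ℕ) :
    frobSub e (hE ((m : ℤ) - 1)) * ((X 0 : MvPolynomial (Fin 2) ℤ) ^ e - X 1 ^ e)
      = X 0 ^ (e * m) - X 1 ^ (e * m) := by
  cases m with
  | zero => simp [hE]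
  | succ k =>
    have : ((k : ℤ) + 1) - 1 = (k : ℤ) := by ring
    rw [Nat.cast_succ, this, hE, if_pos (by positivity), Int.toNat_natCast]
    exact frob_h2_mul e k

lemma xd_ne (n : ℕ) (hn : 1 ≤ n) : ((X 0 : MvPolynomial (Fin 2) ℤ) ^ n - X 1 ^ n) ≠ 0 := by
  intro h
  have := congrArg (eval fun i : Fin 2 => if i = 0 then (1 : ℤ) else 0) h
  simp [zero_pow (Nat.one_le_iff_ne_zero.mp hn)] at this

lemma key {R : Type*} [CommRing R] (x y : R) (a b c e : ℕ) (he : e = a + c) :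
    (x ^ (a + b) - y ^ (a + b)) * (x ^ e - y ^ e)
      = (x ^ a - y ^ a) * (x ^ (b + e) - y ^ (b + e))
        + (x * y) ^ a * ((x ^ c - y ^ c) * (x ^ b - y ^ b)) := by
  subst he; ring


/-- The character recursion for symmetric powers in the n = 2 case: writing
r = r₀ + e·r̄ with 0 ≤ r₀ < e,
h_r = χ_{e−1}·h_{r̄}(x^e,y^e) if r₀ = e−1, and otherwise
h_r = χ_{r₀}·h_{r̄}(x^e,y^e) + (xy)^{r₀+1}·χ_{e−2−r₀}·h_{r̄−1}(x^e,y^e)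
(with h_{−1} = 0). -/
theorem stmt17 (e : ℕ) (he : 2 ≤ e) (r : ℕ) (hr : 1 ≤ r) :
    (r % e = e - 1 → h2 r = h2 (e - 1) * frobSub e (h2 (r / e))) ∧
    (r % e ≠ e - 1 →
      h2 r = h2 (r % e) * frobSub e (h2 (r / e)) +
        (X 0 * X 1) ^ (r % e + 1) * h2 (e - 2 - r % e) *
          frobSub e (hE ((r / e : ℤ) - 1))) := by

  have hd : ((X 0 - X 1) * ((X 0 : MvPolynomial (Fin 2) ℤ) ^ e - X 1 ^ e)) ≠ 0 := by
    refine mul_ne_zero ?_ (xd_ne e (by omega))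
    simpa using xd_ne 1 le_rfl
  have hdm : e * (r / e) + r % e = r := Nat.div_add_mod r e
  have hlt : r % e < e := Nat.mod_lt r (by omega)
  constructor
  · intro h
    apply mul_right_cancel₀ hd
    have h1 : r + 1 = (e - 1) + 1 + e * (r / e) := by omega
    calc h2 r * ((X 0 - X 1) * (X 0 ^ e - X 1 ^ e))
        = (h2 r * (X 0 - X 1)) * (X 0 ^ e - X 1 ^ e) := by ring
      _ = (X 0 ^ (r + 1) - X 1 ^ (r + 1)) * (X 0 ^ e - X 1 ^ e) := by rw [h2_mul]
      _ = (X 0 ^ e - X 1 ^ e) * (X 0 ^ (e * (r / e + 1)) - X 1 ^ (e * (r / e + 1))) := by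
          rw [show r + 1 = e * (r / e + 1) by rw [Nat.mul_succ]; omega]; ring
      _ = (h2 (e - 1) * (X 0 - X 1)) * (frobSub e (h2 (r / e)) * (X 0 ^ e - X 1 ^ e)) := by
          rw [h2_mul, frob_h2_mul, show e - 1 + 1 = e by omega]
      _ = (h2 (e - 1) * frobSub e (h2 (r / e))) * ((X 0 - X 1) * (X 0 ^ e - X 1 ^ e)) := by
          ring
  · intro h
    apply mul_right_cancel₀ hd
    have hc : e - 2 - r % e + 1 = e - 1 - r % e := by omega
    calc h2 r * ((X 0 - X 1) * (X 0 ^ e - X 1 ^ e))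
        = (h2 r * (X 0 - X 1)) * (X 0 ^ e - X 1 ^ e) := by ring
      _ = (X 0 ^ ((r % e + 1) + e * (r / e)) - X 1 ^ ((r % e + 1) + e * (r / e)))
            * (X 0 ^ e - X 1 ^ e) := by rw [h2_mul, show r + 1 = (r % e + 1) + e * (r / e) by omega]
      _ = (X 0 ^ (r % e + 1) - X 1 ^ (r % e + 1))
            * (X 0 ^ (e * (r / e) + e) - X 1 ^ (e * (r / e) + e))
          + (X 0 * X 1) ^ (r % e + 1)
            * ((X 0 ^ (e - 1 - r % e) - X 1 ^ (e - 1 - r % e))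
              * (X 0 ^ (e * (r / e)) - X 1 ^ (e * (r / e)))) := by
          exact key (X 0) (X 1) (r % e + 1) (e * (r / e)) (e - 1 - r % e) e (by omega)
      _ = (h2 (r % e) * (X 0 - X 1)) * (frobSub e (h2 (r / e)) * (X 0 ^ e - X 1 ^ e))
          + (X 0 * X 1) ^ (r % e + 1)
            * ((h2 (e - 2 - r % e) * (X 0 - X 1))
              * (frobSub e (hE ((r / e : ℤ) - 1)) * (X 0 ^ e - X 1 ^ e))) := by
          rw [h2_mul, h2_mul, frob_h2_mul,
            show ((r : ℤ) / (e : ℤ) - 1) = ((r / e : ℕ) : ℤ) - 1 by rw [Int.natCast_div],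
            frob_hE_mul, hc, Nat.mul_succ]
      _ = (h2 (r % e) * frobSub e (h2 (r / e)) +
            (X 0 * X 1) ^ (r % e + 1) * h2 (e - 2 - r % e) *
              frobSub e (hE ((r / e : ℤ) - 1))) * ((X 0 - X 1) * (X 0 ^ e - X 1 ^ e)) := by
          ring
end
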